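/- Let n ≥ 1, let K ⊂ ℝⁿ be a non-empty closed set with K ≠ ℝⁿ, let λ > 0 and let x be a point of the medial axis M_K of K. Let θ_x = sup{ ∠(y₁ − x, y₂ − x) : y₁, y₂ ∈ K(x) } be the separation angle of x, where K(x) = { y ∈ K : |x − y| = dist(x, K) } and ∠ denotes the angle between two nonzero vectors of ℝⁿ. Then sin²(θ_x/2) · dist²(x, K) ≤ M_λ(x; K) ≤ dist²(x, K). -/

import Mathlib

/-- Convex envelope: pointwise sup of affine minorants. -/
noncomputable def convEnv {n : ℕ} (g : EuclideanSpace ℝ (Fin n) → ℝ)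
    (x : EuclideanSpace ℝ (Fin n)) : ℝ :=
  sSup {a : ℝ | ∃ ℓ : EuclideanSpace ℝ (Fin n) →ᵃ[ℝ] ℝ, (∀ y, ℓ y ≤ g y) ∧ a = ℓ x}

/-- Lower compensated convex transform. -/
noncomputable def lowerT {n : ℕ} (lam : ℝ) (f : EuclideanSpace ℝ (Fin n) → ℝ)
    (x : EuclideanSpace ℝ (Fin n)) : ℝ :=
  convEnv (fun y => f y + lam * ‖y‖ ^ 2) x - lam * ‖x‖ ^ 2

/-- Quadratic multiscale medial axis map
`M_λ(x; K) = (1+λ)(dist²(x;K) − C^l_λ(dist²(·;K))(x))`. -/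
noncomputable def mmam {n : ℕ} (lam : ℝ) (K : Set (EuclideanSpace ℝ (Fin n)))
    (x : EuclideanSpace ℝ (Fin n)) : ℝ :=
  (1 + lam) * (Metric.infDist x K ^ 2 - lowerT lam (fun y => Metric.infDist y K ^ 2) x)

/-- The separation angle `θ_x` of a point `x` relative to a closed set `K`:
the sup of angles `∠(y₁ − x, y₂ − x)` over pairs of nearest points `y₁, y₂ ∈ K(x)`. -/
noncomputable def sepAngle {n : ℕ} (K : Set (EuclideanSpace ℝ (Fin n)))
    (x : EuclideanSpace ℝ (Fin n)) : ℝ :=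
  sSup {θ : ℝ | ∃ y₁ ∈ K, ∃ y₂ ∈ K,
    dist x y₁ = Metric.infDist x K ∧ dist x y₂ = Metric.infDist x K ∧
    θ = InnerProductGeometry.angle (y₁ - x) (y₂ - x)}

/-!
For the upper bound, `y ↦ 2λ⟪x, y⟫ - λ‖x‖² + λd²/(1 + λ)` (with `d = dist(x, K)`) is an affine
minorant of `dist²(·, K) + λ‖·‖²`: since `d ≤ dist(y, K) + ‖x - y‖`, this reduces to
`λ d² / (1 + λ) ≤ a² + λ b²` whenever `d ≤ a + b`.

For the lower bound, every affine minorant `ℓ` satisfies `2 ℓ(x) = ℓ(x + w) + ℓ(x - w)`.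
Bounding `dist²(x + w, K)` by the distance to `y₁` and `dist²(x - w, K)` by the distance to `y₂`,
for two nearest points `y₁, y₂`, and taking `w = (y₁ - y₂) / (2(1 + λ))` gives
`M_λ(x; K) ≥ ‖y₁ - y₂‖² / 4 = sin²(θ/2) d²`, where `θ` is the angle at `x`.
The supremum over `θ` is a limit of such angles, and the bound is a closed condition on `θ`.
-/

open Metric InnerProductGeometry RealInnerProductSpace

-- `(1 + λ)(a² + λb²) - λ(a + b)² = (a - λb)²`
theorem mul_sq_div_one_add_le {lam a b c : ℝ} (hlam : 0 ≤ lam) (hc : 0 ≤ c) (h : c ≤ a + b) :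
    lam * c ^ 2 / (1 + lam) ≤ a ^ 2 + lam * b ^ 2 := by
  rw [div_le_iff₀ (by linarith)]
  nlinarith [sq_nonneg (a - lam * b), mul_le_mul_of_nonneg_left (pow_le_pow_left₀ hc h 2) hlam]

theorem mul_infDist_sq_div_one_add_le {α : Type*} [PseudoMetricSpace α] {lam : ℝ}
    (hlam : 0 ≤ lam) (K : Set α) (x y : α) :
    lam * infDist x K ^ 2 / (1 + lam) ≤ infDist y K ^ 2 + lam * dist x y ^ 2 :=
  mul_sq_div_one_add_le hlam infDist_nonneg infDist_le_infDist_add_dist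

theorem norm_sub_sq_eq_four_mul_sin_sq_half_angle {E : Type*} [NormedAddCommGroup E]
    [InnerProductSpace ℝ E] {u v : E} (h : ‖u‖ = ‖v‖) :
    ‖u - v‖ ^ 2 = 4 * Real.sin (angle u v / 2) ^ 2 * ‖u‖ ^ 2 := by
  rw [sq ‖u - v‖, norm_sub_sq_eq_norm_sq_add_norm_sq_sub_two_mul_norm_mul_norm_mul_cos_angle, ← h,
    Real.sin_sq_eq_half_sub, mul_div_cancel₀ _ two_ne_zero]
  ring

section ConvexEnvelope

variable {n : ℕ} {g : EuclideanSpace ℝ (Fin n) → ℝ} {x : EuclideanSpace ℝ (Fin n)}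

theorem le_convEnv (ℓ : EuclideanSpace ℝ (Fin n) →ᵃ[ℝ] ℝ) (hℓ : ∀ y, ℓ y ≤ g y) :
    ℓ x ≤ convEnv g x :=
  le_csSup ⟨g x, by rintro _ ⟨ℓ', hℓ', rfl⟩; exact hℓ' x⟩ ⟨ℓ, hℓ, rfl⟩

theorem convEnv_le_midpoint (hg : ∃ ℓ : EuclideanSpace ℝ (Fin n) →ᵃ[ℝ] ℝ, ∀ y, ℓ y ≤ g y)
    (w : EuclideanSpace ℝ (Fin n)) : convEnv g x ≤ (g (x + w) + g (x - w)) / 2 := by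
  obtain ⟨ℓ₀, hℓ₀⟩ := hg
  refine csSup_le ⟨_, ℓ₀, hℓ₀, rfl⟩ ?_
  rintro _ ⟨ℓ, hℓ, rfl⟩
  have h_add : ℓ (x + w) = ℓ.linear w + ℓ x := by simpa [add_comm] using ℓ.map_vadd x w
  have h_sub : ℓ (x - w) = -ℓ.linear w + ℓ x := by
    simpa [sub_eq_neg_add, add_comm] using ℓ.map_vadd x (-w)
  linarith [hℓ (x + w), hℓ (x - w)]

end ConvexEnvelope

section MedialAxisMap

variable {n : ℕ} {lam : ℝ} {K : Set (EuclideanSpace ℝ (Fin n))} {x : EuclideanSpace ℝ (Fin n)}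

theorem convEnv_infDist_sq_add_le (hlam : 0 ≤ lam) {y₁ y₂ : EuclideanSpace ℝ (Fin n)}
    (hy₁ : y₁ ∈ K) (hy₂ : y₂ ∈ K) :
    convEnv (fun y => infDist y K ^ 2 + lam * ‖y‖ ^ 2) x ≤
      (‖x - y₁‖ ^ 2 + ‖x - y₂‖ ^ 2) / 2 + lam * ‖x‖ ^ 2 - ‖y₁ - y₂‖ ^ 2 / (4 * (1 + lam)) := by
  have hminorant : ∃ ℓ : EuclideanSpace ℝ (Fin n) →ᵃ[ℝ] ℝ,
      ∀ y, ℓ y ≤ infDist y K ^ 2 + lam * ‖y‖ ^ 2 :=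
    ⟨AffineMap.const ℝ _ 0, fun y => by simp only [AffineMap.const_apply]; positivity⟩
  have hle {z y : EuclideanSpace ℝ (Fin n)} (hy : y ∈ K) : infDist z K ^ 2 ≤ ‖z - y‖ ^ 2 := by
    rw [← dist_eq_norm]
    exact pow_le_pow_left₀ infDist_nonneg (infDist_le_dist_of_mem hy) 2
  set w := (2 * (1 + lam))⁻¹ • (y₁ - y₂)
  have hid : ‖x + w - y₁‖ ^ 2 + lam * ‖x + w‖ ^ 2 + (‖x - w - y₂‖ ^ 2 + lam * ‖x - w‖ ^ 2) =
      2 * ((‖x - y₁‖ ^ 2 + ‖x - y₂‖ ^ 2) / 2 + lam * ‖x‖ ^ 2 -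
        ‖y₁ - y₂‖ ^ 2 / (4 * (1 + lam))) := by
    simp only [w, ← real_inner_self_eq_norm_sq, inner_add_left, inner_add_right, inner_sub_left,
      inner_sub_right, real_inner_smul_left, real_inner_smul_right, real_inner_comm x]
    field_simp
    ring
  linarith [convEnv_le_midpoint (x := x) hminorant w, hle (z := x + w) hy₁,
    hle (z := x - w) hy₂]

theorem mmam_le_infDist_sq (hlam : 0 ≤ lam) (K : Set (EuclideanSpace ℝ (Fin n)))
    (x : EuclideanSpace ℝ (Fin n)) : mmam lam K x ≤ infDist x K ^ 2 := by
  set d := infDist x K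
  let ℓ : EuclideanSpace ℝ (Fin n) →ᵃ[ℝ] ℝ := (2 * lam) • (innerₛₗ ℝ x).toAffineMap +
    AffineMap.const ℝ _ (lam * d ^ 2 / (1 + lam) - lam * ‖x‖ ^ 2)
  have hℓ_apply (y : EuclideanSpace ℝ (Fin n)) :
      ℓ y = 2 * lam * ⟪x, y⟫ + (lam * d ^ 2 / (1 + lam) - lam * ‖x‖ ^ 2) := rfl
  have hℓ (y : EuclideanSpace ℝ (Fin n)) : ℓ y ≤ infDist y K ^ 2 + lam * ‖y‖ ^ 2 := by
    have key := mul_infDist_sq_div_one_add_le hlam K x y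
    rw [dist_eq_norm, norm_sub_sq_real] at key
    rw [hℓ_apply]
    linarith
  have hconv := le_convEnv (x := x) ℓ hℓ
  rw [hℓ_apply, real_inner_self_eq_norm_sq] at hconv
  calc mmam lam K x ≤ (1 + lam) * (d ^ 2 - lam * d ^ 2 / (1 + lam)) := by
        unfold mmam lowerT
        gcongr
        linarith
    _ = d ^ 2 := by field_simp; ring

theorem norm_sub_sq_div_four_le_mmam (hlam : 0 ≤ lam) {y₁ y₂ : EuclideanSpace ℝ (Fin n)}
    (hy₁ : y₁ ∈ K) (hy₂ : y₂ ∈ K) (h₁ : dist x y₁ = infDist x K)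
    (h₂ : dist x y₂ = infDist x K) :
    ‖y₁ - y₂‖ ^ 2 / 4 ≤ mmam lam K x := by
  have hconv := convEnv_infDist_sq_add_le (x := x) hlam hy₁ hy₂
  rw [← dist_eq_norm, ← dist_eq_norm, h₁, h₂] at hconv
  calc ‖y₁ - y₂‖ ^ 2 / 4 = (1 + lam) * (‖y₁ - y₂‖ ^ 2 / (4 * (1 + lam))) := by field_simp
    _ ≤ mmam lam K x := by
        unfold mmam lowerT
        gcongr
        linarith

theorem sin_sq_half_angle_mul_infDist_sq_le_mmam (hlam : 0 ≤ lam)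
    {y₁ y₂ : EuclideanSpace ℝ (Fin n)} (hy₁ : y₁ ∈ K) (hy₂ : y₂ ∈ K)
    (h₁ : dist x y₁ = infDist x K) (h₂ : dist x y₂ = infDist x K) :
    Real.sin (angle (y₁ - x) (y₂ - x) / 2) ^ 2 * infDist x K ^ 2 ≤ mmam lam K x := by
  have hchord := norm_sub_sq_eq_four_mul_sin_sq_half_angle
    (show ‖y₁ - x‖ = ‖y₂ - x‖ by rw [← dist_eq_norm', ← dist_eq_norm', h₁, h₂])
  rw [sub_sub_sub_cancel_right, ← dist_eq_norm' x y₁, h₁] at hchord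
  linarith [norm_sub_sq_div_four_le_mmam hlam hy₁ hy₂ h₁ h₂]

end MedialAxisMap

theorem mmam_bounds_on_medial_axis_general (n : ℕ)
    (K : Set (EuclideanSpace ℝ (Fin n))) (lam : ℝ) (hlam : 0 < lam)
    (x : EuclideanSpace ℝ (Fin n))
    (hmed : ∃ y₁ ∈ K, ∃ y₂ ∈ K, y₁ ≠ y₂ ∧
      Metric.infDist x K = dist x y₁ ∧ Metric.infDist x K = dist x y₂) :
    Real.sin (sepAngle K x / 2) ^ 2 * Metric.infDist x K ^ 2 ≤ mmam lam K x ∧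
    mmam lam K x ≤ Metric.infDist x K ^ 2 := by
  refine ⟨?_, mmam_le_infDist_sq hlam.le K x⟩
  obtain ⟨y₁, hy₁, y₂, hy₂, -, h₁, h₂⟩ := hmed
  have hclosed : IsClosed {θ : ℝ | Real.sin (θ / 2) ^ 2 * infDist x K ^ 2 ≤ mmam lam K x} :=
    isClosed_le (by fun_prop) continuous_const
  refine hclosed.closure_subset_iff.2 ?_ <| csSup_mem_closure
    ⟨_, y₁, hy₁, y₂, hy₂, h₁.symm, h₂.symm, rfl⟩ ⟨Real.pi, ?_⟩
  · rintro _ ⟨z₁, hz₁, z₂, hz₂, hd₁, hd₂, rfl⟩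
    exact sin_sq_half_angle_mul_infDist_sq_le_mmam hlam.le hz₁ hz₂ hd₁ hd₂
  · rintro _ ⟨-, -, -, -, -, -, rfl⟩
    exact angle_le_pi _ _

/-- Bounds for the multiscale medial axis map on the medial axis in terms of
the separation angle. -/
theorem mmam_bounds_on_medial_axis (n : ℕ) (hn : 1 ≤ n)
    (K : Set (EuclideanSpace ℝ (Fin n))) (hK : K.Nonempty) (hKc : IsClosed K)
    (hKne : K ≠ Set.univ) (lam : ℝ) (hlam : 0 < lam)
    (x : EuclideanSpace ℝ (Fin n)) (hx : x ∉ K)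
    (hmed : ∃ y₁ ∈ K, ∃ y₂ ∈ K, y₁ ≠ y₂ ∧
      Metric.infDist x K = dist x y₁ ∧ Metric.infDist x K = dist x y₂) :
    Real.sin (sepAngle K x / 2) ^ 2 * Metric.infDist x K ^ 2 ≤ mmam lam K x ∧
    mmam lam K x ≤ Metric.infDist x K ^ 2 :=
  mmam_bounds_on_medial_axis_general n K lam hlam x hmed
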